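/- Fix integers α_1 > α_2 > ⋯ > α_N ≥ 1 and m_1, …, m_N ≥ 1, set n := Σ_r α_r m_r, and for a matrix X of form (0T0) let φ(X) := (A^{11}_0, …, A^{NN}_0) be the tuple of leading Toeplitz coefficients of its diagonal blocks. Then: (i) for all X, Y of form (0T0), φ(XY)_r = φ(X)_r·φ(Y)_r for every r; (ii) X is invertible if and only if every A^{rr}_0 ∈ GL_{m_r}(ℂ); (iii) every invertible X of form (0T0) factors uniquely as X = D·U, where D := ⊕_{r=1}^N (A^{rr}_0 ⊕ ⋯ ⊕ A^{rr}_0) (α_r copies) and U has form (0T0) with φ(U)_r = I_{m_r} for all r. In particular the set 𝕌 of invertible matrices of form (0T0) with φ = (I_{m_1},…,I_{m_N}) is a normal subgroup of the group 𝕋 of all invertible matrices of form (0T0). -/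

import Mathlib

open Matrix

noncomputable section

/-- Form (0T0): block matrix partitioned by Jordan structure `(α, m)` whose `(r,s)` block,
viewed as an `α r × α s` array of `m r × m s` blocks, is a rectangular block
upper-triangular Toeplitz matrix aligned to the top-right corner. -/
def IsForm0T0 {N : ℕ} (α m : Fin N → ℕ)
    (X : Matrix (Σ r : Fin N, Fin (α r) × Fin (m r)) (Σ r : Fin N, Fin (α r) × Fin (m r)) ℂ) :
    Prop :=
  ∃ A : ∀ r s : Fin N, ℕ → Matrix (Fin (m r)) (Fin (m s)) ℂ,
    ∀ (r s : Fin N) (i : Fin (α r)) (j : Fin (α s)) (a : Fin (m r)) (b : Fin (m s)),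
      X ⟨r, (i, a)⟩ ⟨s, (j, b)⟩ =
        if (i : ℕ) + (α s - min (α r) (α s)) ≤ (j : ℕ) then
          A r s ((j : ℕ) - (i : ℕ) - (α s - min (α r) (α s))) a b
        else 0

/-- `E_b(I_m)`: the `bm × bm` block matrix with `I_m` on the block anti-diagonal. -/
def revE (b m : ℕ) : Matrix (Fin b × Fin m) (Fin b × Fin m) ℂ :=
  Matrix.of fun p q => if (p.1 : ℕ) + (q.1 : ℕ) + 1 = b ∧ p.2 = q.2 then 1 else 0

/-- `F = ⊕_r E_{α r}(I_{m r})`. -/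
def bigF {N : ℕ} (α m : Fin N → ℕ) :
    Matrix (Σ r : Fin N, Fin (α r) × Fin (m r)) (Σ r : Fin N, Fin (α r) × Fin (m r)) ℂ :=
  Matrix.blockDiagonal' fun r => revE (α r) (m r)

/-- The `n × n` upper-triangular Jordan block `J_n(λ)`. -/
def Jmat (n : ℕ) (lam : ℂ) : Matrix (Fin n) (Fin n) ℂ :=
  Matrix.of fun i j => if (j : ℕ) = (i : ℕ) then lam else if (j : ℕ) = (i : ℕ) + 1 then 1 else 0

/-- The `n × n` backward identity matrix `E_n`. -/
def ErevC (n : ℕ) : Matrix (Fin n) (Fin n) ℂ :=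
  Matrix.of fun i j => if (i : ℕ) + (j : ℕ) + 1 = n then 1 else 0

/-- `P_n = (1/√2)(I + i E_n)`. -/
noncomputable def Pmat (n : ℕ) : Matrix (Fin n) (Fin n) ℂ :=
  (Real.sqrt 2 : ℂ)⁻¹ • (1 + Complex.I • ErevC n)

/-- `P_n⁻¹ = (1/√2)(I − i E_n)`. -/
noncomputable def PmatInv (n : ℕ) : Matrix (Fin n) (Fin n) ℂ :=
  (Real.sqrt 2 : ℂ)⁻¹ • (1 - Complex.I • ErevC n)

/-- The symmetric canonical form `K_n(λ) = P_n J_n(λ) P_n⁻¹` of a Jordan block. -/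
noncomputable def Kmat (n : ℕ) (lam : ℂ) : Matrix (Fin n) (Fin n) ℂ :=
  Pmat n * Jmat n lam * PmatInv n

/-- `T(A_0, …)`: the `β × β` block upper-triangular Toeplitz matrix with blocks `A_j`. -/
def blkToeplitz (β p q : ℕ) (A : ℕ → Matrix (Fin p) (Fin q) ℂ) :
    Matrix (Fin β × Fin p) (Fin β × Fin q) ℂ :=
  Matrix.of fun x y =>
    if (x.1 : ℕ) ≤ (y.1 : ℕ) then A ((y.1 : ℕ) - (x.1 : ℕ)) x.2 y.2 else 0

/-- The `(i,i)`-th `m r × m r` entry-block of the `(r,r)` diagonal block of `X`; for a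
matrix of form (0T0) this is the leading Toeplitz coefficient `A^{rr}_0`. -/
def diagLead {N : ℕ} (α m : Fin N → ℕ)
    (X : Matrix (Σ r : Fin N, Fin (α r) × Fin (m r)) (Σ r : Fin N, Fin (α r) × Fin (m r)) ℂ)
    (r : Fin N) (i : Fin (α r)) : Matrix (Fin (m r)) (Fin (m r)) ℂ :=
  Matrix.of fun a b => X ⟨r, (i, a)⟩ ⟨r, (i, b)⟩

/-- The space of skew-symmetric matrices commuting with `S`. -/
def skewCommSubmodule (ι : Type*) [Fintype ι] [DecidableEq ι] (S : Matrix ι ι ℂ) :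
    Submodule ℂ (Matrix ι ι ℂ) where
  carrier := {X | Xᵀ = -X ∧ X * S = S * X}
  add_mem' := by
    rintro a b ⟨ha1, ha2⟩ ⟨hb1, hb2⟩
    refine ⟨?_, ?_⟩
    · rw [Matrix.transpose_add, ha1, hb1, neg_add]
    · rw [add_mul, mul_add, ha2, hb2]
  zero_mem' := by
    refine ⟨?_, ?_⟩
    · simp
    · simp
  smul_mem' := by
    rintro c a ⟨h1, h2⟩
    refine ⟨?_, ?_⟩
    · rw [Matrix.transpose_smul, h1, smul_neg]
    · rw [Matrix.smul_mul, Matrix.mul_smul, h2]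

/-- The isotropy group (as a set) of `S` under orthogonal similarity. -/
def sigmaSet {ι : Type*} [Fintype ι] [DecidableEq ι] (S : Matrix ι ι ℂ) : Set (Matrix ι ι ℂ) :=
  {Q | Qᵀ * Q = 1 ∧ Qᵀ * S * Q = S}


/-!
A matrix has form (0T0) exactly when it commutes with the nilpotent matrix
`H = ⊕_r J_{α_r}(0) ⊗ I_{m_r}`, so these matrices form an algebra closed under inversion.
Because the `α_r` are distinct, the `(r, i), (r, i)` entry-block of `X * Y` only receives the
product of the `(r, i), (r, i)` entry-blocks, which gives the multiplicativity of `φ`; ordering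
the entry-block positions `(r, i)` by `i` and then by decreasing `α_r` makes `X` block upper
triangular, so `det X = ∏_r det (A^{rr}_0) ^ α_r`. The factorization is `U = D⁻¹ X`, and the
normality of `𝕌` follows from the multiplicativity of `φ`.
-/

open Function
open scoped Kronecker

lemma Matrix.commute_nonsing_inv_left {n R : Type*} [Fintype n] [DecidableEq n] [CommRing R]
    {A B : Matrix n n R} (h : Commute A B) : Commute A⁻¹ B := by
  by_cases hA : IsUnit A.det
  · calc A⁻¹ * B = A⁻¹ * (B * A) * A⁻¹ := by
          rw [mul_assoc, mul_assoc, mul_nonsing_inv _ hA, mul_one]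
      _ = B * A⁻¹ := by rw [← h.eq, nonsing_inv_mul_cancel_left _ _ hA]
  · simp [nonsing_inv_apply_not_isUnit _ hA]

variable {N : ℕ} {α m : Fin N → ℕ}

abbrev BlockIdx (α m : Fin N → ℕ) : Type := Σ r : Fin N, Fin (α r) × Fin (m r)

/-- Entries of `X` with the entry-block positions `i, j` taken in `ℕ` and extended by zero, so
that shifting `i, j` needs no bound bookkeeping. -/
def blockEntry (X : Matrix (BlockIdx α m) (BlockIdx α m) ℂ) (r s : Fin N) (a : Fin (m r))
    (b : Fin (m s)) (i j : ℕ) : ℂ :=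
  if h : i < α r ∧ j < α s then X ⟨r, (⟨i, h.1⟩, a)⟩ ⟨s, (⟨j, h.2⟩, b)⟩ else 0

@[simp]
lemma blockEntry_fin (X : Matrix (BlockIdx α m) (BlockIdx α m) ℂ) (r s : Fin N) (a : Fin (m r))
    (b : Fin (m s)) (i : Fin (α r)) (j : Fin (α s)) :
    blockEntry X r s a b i j = X ⟨r, (i, a)⟩ ⟨s, (j, b)⟩ :=
  dif_pos ⟨i.2, j.2⟩

lemma blockEntry_of_le_left (X : Matrix (BlockIdx α m) (BlockIdx α m) ℂ) {r s : Fin N}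
    (a : Fin (m r)) (b : Fin (m s)) {i : ℕ} (j : ℕ) (hi : α r ≤ i) :
    blockEntry X r s a b i j = 0 :=
  dif_neg fun h => (h.1.trans_le hi).false

lemma blockEntry_of_le_right (X : Matrix (BlockIdx α m) (BlockIdx α m) ℂ) {r s : Fin N}
    (a : Fin (m r)) (b : Fin (m s)) (i : ℕ) {j : ℕ} (hj : α s ≤ j) :
    blockEntry X r s a b i j = 0 :=
  dif_neg fun h => (h.2.trans_le hj).false

variable (α m) in
def nilpotentJordan : Matrix (BlockIdx α m) (BlockIdx α m) ℂ :=
  blockDiagonal' fun r => Jmat (α r) 0 ⊗ₖ (1 : Matrix (Fin (m r)) (Fin (m r)) ℂ)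

lemma nilpotentJordan_apply_self (r : Fin N) (i j : Fin (α r)) (a b : Fin (m r)) :
    nilpotentJordan α m ⟨r, (i, a)⟩ ⟨r, (j, b)⟩ =
      if (j : ℕ) = i + 1 ∧ a = b then 1 else 0 := by
  simp only [nilpotentJordan, blockDiagonal'_apply_eq, kroneckerMap_apply, Jmat, of_apply,
    one_apply]
  split_ifs <;> simp_all

lemma nilpotentJordan_apply_of_ne {r s : Fin N} (hrs : r ≠ s) (p : Fin (α r) × Fin (m r))
    (q : Fin (α s) × Fin (m s)) : nilpotentJordan α m ⟨r, p⟩ ⟨s, q⟩ = 0 :=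
  blockDiagonal'_apply_ne _ _ _ hrs

lemma mul_nilpotentJordan_apply (X : Matrix (BlockIdx α m) (BlockIdx α m) ℂ) (x : BlockIdx α m)
    (s : Fin N) (j : Fin (α s)) (b : Fin (m s)) :
    (X * nilpotentJordan α m) x ⟨s, (j, b)⟩ =
      ∑ k : Fin (α s), if (j : ℕ) = k + 1 then X x ⟨s, (k, b)⟩ else 0 := by
  rw [mul_apply, Fintype.sum_sigma, Finset.sum_eq_single s]
  · simp [Fintype.sum_prod_type, nilpotentJordan_apply_self, ite_and]
  · intro t _ hts
    simp [nilpotentJordan_apply_of_ne hts]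
  · simp

lemma nilpotentJordan_mul_apply (X : Matrix (BlockIdx α m) (BlockIdx α m) ℂ) (r : Fin N)
    (i : Fin (α r)) (a : Fin (m r)) (y : BlockIdx α m) :
    (nilpotentJordan α m * X) ⟨r, (i, a)⟩ y =
      ∑ k : Fin (α r), if (k : ℕ) = i + 1 then X ⟨r, (k, a)⟩ y else 0 := by
  rw [mul_apply, Fintype.sum_sigma, Finset.sum_eq_single r]
  · simp [Fintype.sum_prod_type, nilpotentJordan_apply_self, ite_and]
  · intro t _ hrt
    simp [nilpotentJordan_apply_of_ne (Ne.symm hrt)]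
  · simp

lemma blockEntry_nilpotentJordan_mul (X : Matrix (BlockIdx α m) (BlockIdx α m) ℂ)
    (r s : Fin N) (a : Fin (m r)) (b : Fin (m s)) (i j : ℕ) :
    blockEntry (nilpotentJordan α m * X) r s a b i j = blockEntry X r s a b (i + 1) j := by
  rcases lt_or_ge i (α r) with hi | hi
  · rcases lt_or_ge j (α s) with hj | hj
    · have h := nilpotentJordan_mul_apply X r ⟨i, hi⟩ a ⟨s, (⟨j, hj⟩, b)⟩
      simp_rw [← blockEntry_fin _ r s a b] at h
      rw [h, Fin.sum_univ_eq_sum_range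
        (fun k => if k = i + 1 then blockEntry X r s a b k j else 0), Finset.sum_ite_eq']
      split_ifs with h'
      · rfl
      · exact (blockEntry_of_le_left X a b j (by simpa using h')).symm
    · rw [blockEntry_of_le_right _ a b _ hj, blockEntry_of_le_right _ a b _ hj]
  · rw [blockEntry_of_le_left _ a b _ hi, blockEntry_of_le_left _ a b _ (by omega)]

lemma blockEntry_mul_nilpotentJordan_zero (X : Matrix (BlockIdx α m) (BlockIdx α m) ℂ)
    (r s : Fin N) (a : Fin (m r)) (b : Fin (m s)) (i : ℕ) :
    blockEntry (X * nilpotentJordan α m) r s a b i 0 = 0 := by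
  unfold blockEntry
  split_ifs with h
  · simp [mul_nilpotentJordan_apply]
  · rfl

lemma blockEntry_mul_nilpotentJordan_succ (X : Matrix (BlockIdx α m) (BlockIdx α m) ℂ)
    (r s : Fin N) (a : Fin (m r)) (b : Fin (m s)) (i : ℕ) {j : ℕ} (hj : j + 1 < α s) :
    blockEntry (X * nilpotentJordan α m) r s a b i (j + 1) = blockEntry X r s a b i j := by
  rcases lt_or_ge i (α r) with hi | hi
  · have h := mul_nilpotentJordan_apply X ⟨r, (⟨i, hi⟩, a)⟩ s ⟨j + 1, hj⟩ b
    simp_rw [← blockEntry_fin _ r s a b] at h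
    rw [h, Fin.sum_univ_eq_sum_range
      (fun k => if j + 1 = k + 1 then blockEntry X r s a b i k else 0)]
    simp [hj.trans' (Nat.lt_succ_self j)]
  · rw [blockEntry_of_le_left _ a b _ hi, blockEntry_of_le_left _ a b _ hi]

lemma isForm0T0_iff_blockEntry {X : Matrix (BlockIdx α m) (BlockIdx α m) ℂ} :
    IsForm0T0 α m X ↔ ∃ A : ∀ r s : Fin N, ℕ → Matrix (Fin (m r)) (Fin (m s)) ℂ,
      ∀ r s a b (i j : ℕ), blockEntry X r s a b i j =
        if i < α r ∧ j < α s ∧ i + (α s - min (α r) (α s)) ≤ j then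
          A r s (j - i - (α s - min (α r) (α s))) a b
        else 0 := by
  refine exists_congr fun A => ⟨fun hA r s a b i j => ?_, fun hA r s i j a b => ?_⟩
  · rcases lt_or_ge i (α r) with hi | hi
    · rcases lt_or_ge j (α s) with hj | hj
      · simpa [blockEntry, hi, hj] using hA r s ⟨i, hi⟩ ⟨j, hj⟩ a b
      · rw [blockEntry_of_le_right X a b i hj, if_neg (by omega)]
    · rw [blockEntry_of_le_left X a b j hi, if_neg (by omega)]
  · simpa using hA r s a b i j

lemma blockEntry_succ_zero_of_commute {X : Matrix (BlockIdx α m) (BlockIdx α m) ℂ}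
    (h : Commute X (nilpotentJordan α m)) (r s : Fin N) (a : Fin (m r)) (b : Fin (m s)) (i : ℕ) :
    blockEntry X r s a b (i + 1) 0 = 0 := by
  rw [← blockEntry_nilpotentJordan_mul, ← h.eq, blockEntry_mul_nilpotentJordan_zero]

lemma blockEntry_add_of_commute {X : Matrix (BlockIdx α m) (BlockIdx α m) ℂ}
    (h : Commute X (nilpotentJordan α m)) (r s : Fin N) (a : Fin (m r)) (b : Fin (m s))
    (i j k : ℕ) (hjk : j + k < α s) :
    blockEntry X r s a b i j = blockEntry X r s a b (i + k) (j + k) := by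
  induction k with
  | zero => rfl
  | succ k ih =>
    rw [ih (by omega), ← blockEntry_mul_nilpotentJordan_succ X r s a b _ (j := j + k) hjk, h.eq,
      blockEntry_nilpotentJordan_mul]
    rfl

lemma isForm0T0_of_commute {X : Matrix (BlockIdx α m) (BlockIdx α m) ℂ}
    (h : Commute X (nilpotentJordan α m)) : IsForm0T0 α m X := by
  refine isForm0T0_iff_blockEntry.2
    ⟨fun r s d => of fun a b => blockEntry X r s a b 0 (d + (α s - min (α r) (α s))), ?_⟩
  intro r s a b i j
  rcases lt_or_ge i (α r) with hi | hi
  swap; · rw [blockEntry_of_le_left X a b j hi, if_neg (by omega)]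
  rcases lt_or_ge j (α s) with hj | hj
  swap; · rw [blockEntry_of_le_right X a b i hj, if_neg (by omega)]
  split_ifs with hle
  · change _ = blockEntry X r s a b 0 _
    rw [blockEntry_add_of_commute h r s a b 0 _ i (by omega)]
    congr 1 <;> omega
  · rcases lt_or_ge j i with hji | hij
    · obtain ⟨k, hk⟩ := Nat.exists_eq_add_of_lt hji
      have h0 := blockEntry_add_of_commute h r s a b (k + 1) 0 j (by omega)
      rwa [blockEntry_succ_zero_of_commute h, zero_add, show k + 1 + j = i by omega, eq_comm] at h0
    · rw [blockEntry_add_of_commute h r s a b i j (α r - i) (by omega),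
        blockEntry_of_le_left X a b _ (by omega)]

lemma commute_of_isForm0T0 {X : Matrix (BlockIdx α m) (BlockIdx α m) ℂ}
    (hX : IsForm0T0 α m X) : Commute X (nilpotentJordan α m) := by
  obtain ⟨A, hA⟩ := isForm0T0_iff_blockEntry.1 hX
  ext ⟨r, i, a⟩ ⟨s, j, b⟩
  rw [← blockEntry_fin (X * _) r s a b, ← blockEntry_fin (_ * X) r s a b,
    blockEntry_nilpotentJordan_mul]
  have hi := i.2
  obtain ⟨j, hj⟩ := j
  cases j with
  | zero => dsimp only; rw [blockEntry_mul_nilpotentJordan_zero, hA, if_neg (by omega)]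
  | succ j =>
    dsimp only
    rw [blockEntry_mul_nilpotentJordan_succ X r s a b _ hj, hA, hA]
    split_ifs <;> first | rfl | omega | congr 1; omega

lemma isForm0T0_iff_commute {X : Matrix (BlockIdx α m) (BlockIdx α m) ℂ} :
    IsForm0T0 α m X ↔ Commute X (nilpotentJordan α m) :=
  ⟨commute_of_isForm0T0, isForm0T0_of_commute⟩

namespace IsForm0T0

variable {X Y : Matrix (BlockIdx α m) (BlockIdx α m) ℂ}

lemma mul (hX : IsForm0T0 α m X) (hY : IsForm0T0 α m Y) : IsForm0T0 α m (X * Y) :=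
  isForm0T0_iff_commute.2 ((commute_of_isForm0T0 hX).mul_left (commute_of_isForm0T0 hY))

lemma inv (hX : IsForm0T0 α m X) : IsForm0T0 α m X⁻¹ :=
  isForm0T0_iff_commute.2 (commute_nonsing_inv_left (commute_of_isForm0T0 hX))

lemma apply_eq_zero (hX : IsForm0T0 α m X) {r s : Fin N} {i : Fin (α r)} {j : Fin (α s)}
    (a : Fin (m r)) (b : Fin (m s)) (h : (j : ℕ) < i + (α s - min (α r) (α s))) :
    X ⟨r, (i, a)⟩ ⟨s, (j, b)⟩ = 0 := by
  obtain ⟨A, hA⟩ := hX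
  rw [hA, if_neg (by omega)]

lemma diagLead_eq (hX : IsForm0T0 α m X) (r : Fin N) (i i' : Fin (α r)) :
    diagLead α m X r i = diagLead α m X r i' := by
  obtain ⟨A, hA⟩ := hX
  ext a b
  simp [diagLead, hA]

lemma apply_mul_apply_eq_zero (hα : Injective α) (hX : IsForm0T0 α m X)
    (hY : IsForm0T0 α m Y) {r t : Fin N} {i : Fin (α r)} {k : Fin (α t)} (a b : Fin (m r))
    (c : Fin (m t)) (h : ¬(t = r ∧ (k : ℕ) = i)) :
    X ⟨r, (i, a)⟩ ⟨t, (k, c)⟩ * Y ⟨t, (k, c)⟩ ⟨r, (i, b)⟩ = 0 := by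
  by_cases hk : (k : ℕ) < i + (α t - min (α r) (α t))
  · rw [hX.apply_eq_zero a c hk, zero_mul]
  by_cases hi : (i : ℕ) < k + (α r - min (α t) (α r))
  · rw [hY.apply_eq_zero c b hi, mul_zero]
  exact (h ⟨hα (by omega), by omega⟩).elim

lemma diagLead_mul (hα : Injective α) (hX : IsForm0T0 α m X) (hY : IsForm0T0 α m Y)
    (r : Fin N) (i : Fin (α r)) :
    diagLead α m (X * Y) r i = diagLead α m X r i * diagLead α m Y r i := by
  ext a b
  simp only [diagLead, of_apply, mul_apply]
  rw [Fintype.sum_sigma, Finset.sum_eq_single r, Fintype.sum_prod_type, Finset.sum_eq_single i]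
  · intro k _ hki
    exact Finset.sum_eq_zero fun c _ =>
      hX.apply_mul_apply_eq_zero hα hY a b c fun h => hki (Fin.ext h.2)
  · simp
  · intro t _ htr
    exact Finset.sum_eq_zero fun kc _ =>
      hX.apply_mul_apply_eq_zero hα hY a b kc.2 fun h => htr h.1
  · simp

end IsForm0T0

variable (α) in
def blockKey (p : Σ r : Fin N, Fin (α r)) : ℕ ×ₗ ℕᵒᵈ :=
  toLex ((p.2 : ℕ), OrderDual.toDual (α p.1))

lemma blockKey_injective (hα : Injective α) : Injective (blockKey α) := by
  rintro ⟨r, i⟩ ⟨r', i'⟩ h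
  simp only [blockKey, toLex_inj, Prod.mk.injEq, OrderDual.toDual_inj] at h
  obtain rfl := hα h.2
  rw [Fin.val_inj.1 h.1]

lemma IsForm0T0.blockTriangular {X : Matrix (BlockIdx α m) (BlockIdx α m) ℂ}
    (hX : IsForm0T0 α m X) : X.BlockTriangular fun x => blockKey α ⟨x.1, x.2.1⟩ := by
  rintro ⟨r, i, a⟩ ⟨s, j, b⟩ hlt
  simp only [blockKey, Prod.Lex.toLex_lt_toLex, OrderDual.toDual_lt_toDual] at hlt
  exact hX.apply_eq_zero a b (by omega)

lemma det_toSquareBlock_blockKey (hα : Injective α)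
    (X : Matrix (BlockIdx α m) (BlockIdx α m) ℂ) (r : Fin N) (i : Fin (α r)) :
    (X.toSquareBlock (fun x => blockKey α ⟨x.1, x.2.1⟩) (blockKey α ⟨r, i⟩)).det =
      (diagLead α m X r i).det := by
  let e (c : Fin (m r)) :
      {x : BlockIdx α m // blockKey α ⟨x.1, x.2.1⟩ = blockKey α ⟨r, i⟩} :=
    ⟨⟨r, (i, c)⟩, rfl⟩
  have he : Bijective e := by
    refine ⟨fun c c' h => by simpa [e] using h, ?_⟩
    rintro ⟨⟨t, k, c⟩, h⟩
    obtain ⟨rfl, rfl⟩ := Sigma.mk.inj_iff.1 (blockKey_injective hα h)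
    exact ⟨c, rfl⟩
  rw [← det_submatrix_equiv_self (Equiv.ofBijective e he)]
  rfl

lemma IsForm0T0.det_eq_prod (hα : Injective α) {X : Matrix (BlockIdx α m) (BlockIdx α m) ℂ}
    (hX : IsForm0T0 α m X) : X.det = ∏ r, ∏ i : Fin (α r), (diagLead α m X r i).det := by
  have hsub : Finset.univ.image (fun x : BlockIdx α m => blockKey α ⟨x.1, x.2.1⟩) ⊆
      Finset.univ.image (blockKey α) := by
    intro k hk
    obtain ⟨x, -, rfl⟩ := Finset.mem_image.1 hk
    exact Finset.mem_image_of_mem _ (Finset.mem_univ _)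
  rw [hX.blockTriangular.det, Finset.prod_subset hsub, Finset.prod_image, Fintype.prod_sigma]
  · simp only [det_toSquareBlock_blockKey hα]
  · exact fun p _ q _ h => blockKey_injective hα h
  · intro k _ hk
    have : IsEmpty {x : BlockIdx α m // blockKey α ⟨x.1, x.2.1⟩ = k} :=
      ⟨fun x => hk (Finset.mem_image.2 ⟨x.1, Finset.mem_univ _, x.2⟩)⟩
    exact det_isEmpty

lemma IsForm0T0.isUnit_iff (hα : Injective α) {X : Matrix (BlockIdx α m) (BlockIdx α m) ℂ}
    (hX : IsForm0T0 α m X) (i : ∀ r, Fin (α r)) :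
    IsUnit X ↔ ∀ r, IsUnit (diagLead α m X r (i r)) := by
  simp_rw [isUnit_iff_isUnit_det, hX.det_eq_prod hα, fun r k => hX.diagLead_eq r k (i r),
    Finset.prod_const, Finset.card_univ, Fintype.card_fin, isUnit_iff_ne_zero,
    Finset.prod_ne_zero_iff, Finset.mem_univ, true_imp_iff]
  exact forall_congr' fun r => pow_ne_zero_iff (i r).pos.ne'

variable (α) in
def blockRepeat (L : ∀ r, Matrix (Fin (m r)) (Fin (m r)) ℂ) :
    Matrix (BlockIdx α m) (BlockIdx α m) ℂ :=
  blockDiagonal' fun r => of fun p q : Fin (α r) × Fin (m r) =>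
    if p.1 = q.1 then L r p.2 q.2 else 0

lemma blockRepeat_eq_blockDiagonal'_kronecker (L : ∀ r, Matrix (Fin (m r)) (Fin (m r)) ℂ) :
    blockRepeat α L =
      blockDiagonal' fun r => (1 : Matrix (Fin (α r)) (Fin (α r)) ℂ) ⊗ₖ L r := by
  ext ⟨r, i, a⟩ ⟨s, j, b⟩
  by_cases hrs : r = s
  · subst hrs
    simp [blockRepeat, blockDiagonal'_apply_eq, one_apply]
  · simp [blockRepeat, blockDiagonal'_apply_ne _ _ _ hrs]

lemma isForm0T0_blockRepeat (L : ∀ r, Matrix (Fin (m r)) (Fin (m r)) ℂ) :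
    IsForm0T0 α m (blockRepeat α L) := by
  refine isForm0T0_iff_commute.2 ?_
  simp only [Commute, SemiconjBy, blockRepeat_eq_blockDiagonal'_kronecker, nilpotentJordan,
    ← blockDiagonal'_mul, ← mul_kronecker_mul, one_mul, mul_one]

lemma diagLead_blockRepeat (L : ∀ r, Matrix (Fin (m r)) (Fin (m r)) ℂ) (r : Fin N)
    (i : Fin (α r)) : diagLead α m (blockRepeat α L) r i = L r := by
  ext a b
  simp [diagLead, blockRepeat, blockDiagonal'_apply_eq]

lemma diagLead_one (r : Fin N) (i : Fin (α r)) :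
    diagLead α m (1 : Matrix (BlockIdx α m) (BlockIdx α m) ℂ) r i = 1 := by
  ext a b
  simp [diagLead, one_apply]

lemma diagLead_eq_one_iff {U : Matrix (BlockIdx α m) (BlockIdx α m) ℂ} {r : Fin N}
    {i : Fin (α r)} :
    diagLead α m U r i = 1 ↔
      ∀ a b, U ⟨r, (i, a)⟩ ⟨r, (i, b)⟩ = if a = b then 1 else 0 := by
  simp [← Matrix.ext_iff, diagLead, one_apply]

lemma IsForm0T0.diagLead_nonsing_inv_mul_eq_one (hα : Injective α)
    {X Y : Matrix (BlockIdx α m) (BlockIdx α m) ℂ} (hX : IsForm0T0 α m X)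
    (hY : IsForm0T0 α m Y) (hYu : IsUnit Y.det) {r : Fin N} {i : Fin (α r)}
    (h : diagLead α m X r i = diagLead α m Y r i) : diagLead α m (Y⁻¹ * X) r i = 1 := by
  rw [hY.inv.diagLead_mul hα hX, h, ← hY.inv.diagLead_mul hα hY, nonsing_inv_mul _ hYu,
    diagLead_one]

theorem stmt9 (N : ℕ) (α m : Fin N → ℕ)
    (hαa : StrictAnti α) (hα1 : ∀ r, 0 < α r) :
    -- (i) multiplicativity of the leading coefficients
    (∀ X Y, IsForm0T0 α m X → IsForm0T0 α m Y → ∀ r : Fin N,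
      diagLead α m (X * Y) r ⟨0, hα1 r⟩ =
        diagLead α m X r ⟨0, hα1 r⟩ * diagLead α m Y r ⟨0, hα1 r⟩) ∧
    -- (ii) invertibility criterion
    (∀ X, IsForm0T0 α m X →
      (IsUnit X ↔ ∀ r : Fin N, IsUnit (diagLead α m X r ⟨0, hα1 r⟩))) ∧
    -- (iii) unique factorization X = D · U
    (∀ X, IsForm0T0 α m X → IsUnit X →
      ∃ U, IsForm0T0 α m U ∧
        (∀ (r : Fin N) (i : Fin (α r)) (a b : Fin (m r)),
          U ⟨r, (i, a)⟩ ⟨r, (i, b)⟩ = if a = b then 1 else 0) ∧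
        X = (Matrix.blockDiagonal' fun r =>
          Matrix.of fun p q : Fin (α r) × Fin (m r) =>
            if p.1 = q.1 then diagLead α m X r ⟨0, hα1 r⟩ p.2 q.2 else 0) * U ∧
        ∀ U', IsForm0T0 α m U' →
          (∀ (r : Fin N) (i : Fin (α r)) (a b : Fin (m r)),
            U' ⟨r, (i, a)⟩ ⟨r, (i, b)⟩ = if a = b then 1 else 0) →
          X = (Matrix.blockDiagonal' fun r =>
            Matrix.of fun p q : Fin (α r) × Fin (m r) =>
              if p.1 = q.1 then diagLead α m X r ⟨0, hα1 r⟩ p.2 q.2 else 0) * U' →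
          U' = U) ∧
    -- (iv) 𝕌 is a normal subgroup of 𝕋
    (∀ X U, IsForm0T0 α m X → IsUnit X → IsForm0T0 α m U → IsUnit U →
      (∀ (r : Fin N) (i : Fin (α r)) (a b : Fin (m r)),
        U ⟨r, (i, a)⟩ ⟨r, (i, b)⟩ = if a = b then 1 else 0) →
      IsForm0T0 α m (X⁻¹ * U * X) ∧
        ∀ (r : Fin N) (i : Fin (α r)) (a b : Fin (m r)),
          (X⁻¹ * U * X) ⟨r, (i, a)⟩ ⟨r, (i, b)⟩ = if a = b then 1 else 0) := by
  have hα := hαa.injective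
  refine ⟨fun X Y hX hY r => hX.diagLead_mul hα hY r _, fun X hX => hX.isUnit_iff hα _,
    fun X hX hXu => ?_, fun X U hX hXu hU _ hUdiag => ?_⟩
  · set D := blockRepeat α fun r => diagLead α m X r ⟨0, hα1 r⟩
    have hD : IsForm0T0 α m D := isForm0T0_blockRepeat _
    have hDu : IsUnit D.det := by
      rw [← isUnit_iff_isUnit_det, hD.isUnit_iff hα fun r => ⟨0, hα1 r⟩]
      simpa [D, diagLead_blockRepeat] using (hX.isUnit_iff hα fun r => ⟨0, hα1 r⟩).1 hXu
    refine ⟨D⁻¹ * X, hD.inv.mul hX,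
      fun r i => diagLead_eq_one_iff.1 (hX.diagLead_nonsing_inv_mul_eq_one hα hD hDu ?_),
      (mul_nonsing_inv_cancel_left _ _ hDu).symm, fun U' _ _ hXU' => ?_⟩
    · rw [diagLead_blockRepeat, hX.diagLead_eq]
    · exact (nonsing_inv_mul_cancel_left _ _ hDu).symm.trans (congrArg (D⁻¹ * ·) hXU'.symm)
  · refine ⟨(hX.inv.mul hU).mul hX, fun r i => diagLead_eq_one_iff.1 ?_⟩
    rw [mul_assoc]
    refine (hU.mul hX).diagLead_nonsing_inv_mul_eq_one hα hX
      ((isUnit_iff_isUnit_det X).1 hXu) ?_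
    rw [hU.diagLead_mul hα hX, diagLead_eq_one_iff.2 (hUdiag r i), one_mul]
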